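/- Let K ≥ 1 be an integer, 0 ≤ ε < 1, θ > 0, μ > 0, and τ ≥ 0. Then Σ_{ρ=K}^∞ C(ρ−1, K−1) ε^{ρ−K}(1−ε)^K [e^{−2θτ} γ(μτ, ρ) + (μ/(2θ+μ))^ρ (1 − γ((2θ+μ)τ, ρ))] = ∫_0^∞ e^{−2θ · max(τ, y)} · ((1−ε)μ)^K y^{K−1} e^{−(1−ε)μ y}/(K−1)! dy, where γ(x, ρ) = (1/(ρ−1)!) ∫_0^x t^{ρ−1} e^{−t} dt and C(·,·) is the binomial coefficient. -/

import Mathlib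

/-!
With ρ = n + K, the weights C(ρ-1, K-1) ε^{ρ-K} (1-ε)^K mix the Erlang(ρ, μ) densities into the
Erlang(K, (1-ε)μ) density: after pulling out the common factors, the series is the exponential
series of εμy. For one Erlang(ρ, μ) variable, split the expectation at τ. Below τ the integrand is
the constant e^{-2θτ} times the density, whose integral is γ(μτ, ρ). Above τ, the factor e^{-2θy}
turns the Erlang(ρ, μ) density into (μ/(2θ+μ))^ρ times the Erlang(ρ, 2θ+μ) density, whose tail is
1 - γ((2θ+μ)τ, ρ). All terms are nonnegative, so the series and the integral may be interchanged.
-/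

open Real MeasureTheory

/-- The normalized lower incomplete Gamma function
`γ(x, ρ) = (1/(ρ-1)!) ∫_0^x t^{ρ-1} e^{-t} dt`. -/
noncomputable def normIncGamma (x : ℝ) (ρ : ℕ) : ℝ :=
  (1 / (Nat.factorial (ρ - 1) : ℝ)) * ∫ t in (0 : ℝ)..x, t ^ (ρ - 1) * Real.exp (-t)

open Set Nat

theorem hasSum_integral_of_nonneg_of_hasSum {ι α : Type*} [Countable ι] [MeasurableSpace α]
    {ν : Measure α} {F : ι → α → ℝ} {f : α → ℝ} (hF_meas : ∀ i, AEStronglyMeasurable (F i) ν)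
    (hF_nonneg : ∀ i, 0 ≤ᵐ[ν] F i) (hf : Integrable f ν)
    (h_lim : ∀ᵐ a ∂ν, HasSum (fun i => F i a) (f a)) :
    HasSum (fun i => ∫ a, F i a ∂ν) (∫ a, f a ∂ν) :=
  hasSum_integral_of_dominated_convergence F hF_meas
    (fun i => (hF_nonneg i).mono fun _ h => (norm_of_nonneg h).le)
    (h_lim.mono fun _ h => h.summable)
    (hf.congr (h_lim.mono fun _ h => h.tsum_eq.symm)) h_lim

noncomputable def erlangPDF (ρ : ℕ) (μ y : ℝ) : ℝ :=
  μ ^ ρ * y ^ (ρ - 1) * exp (-μ * y) / (ρ - 1)!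

section Erlang

variable {ρ : ℕ} {μ : ℝ}

theorem erlangPDF_nonneg (hμ : 0 ≤ μ) {y : ℝ} (hy : 0 ≤ y) : 0 ≤ erlangPDF ρ μ y := by
  unfold erlangPDF; positivity

@[fun_prop]
theorem continuous_erlangPDF (ρ : ℕ) (μ : ℝ) : Continuous (erlangPDF ρ μ) := by
  unfold erlangPDF; fun_prop

theorem intervalIntegral_erlangPDF (hρ : 0 < ρ) (hμ : μ ≠ 0) (τ : ℝ) :
    ∫ y in (0 : ℝ)..τ, erlangPDF ρ μ y = normIncGamma (μ * τ) ρ := by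
  obtain ⟨m, rfl⟩ : ∃ m, ρ = m + 1 := ⟨ρ - 1, by omega⟩
  have h : ∀ y, erlangPDF (m + 1) μ y = μ / m ! * ((μ * y) ^ m * exp (-(μ * y))) := fun y => by
    simp only [erlangPDF, Nat.add_sub_cancel, mul_pow, pow_succ, neg_mul]; ring
  simp only [h, normIncGamma, Nat.add_sub_cancel, intervalIntegral.integral_const_mul,
    intervalIntegral.integral_comp_mul_left (fun t => t ^ m * exp (-t)) hμ, mul_zero, smul_eq_mul]
  field_simp

theorem integral_erlangPDF_Ioi_zero (hρ : 0 < ρ) (hμ : 0 < μ) :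
    ∫ y in Ioi 0, erlangPDF ρ μ y = 1 := by
  obtain ⟨m, rfl⟩ : ∃ m, ρ = m + 1 := ⟨ρ - 1, by omega⟩
  have h : ∀ y, erlangPDF (m + 1) μ y
      = μ ^ (m + 1) / m ! * (y ^ ((m + 1 : ℝ) - 1) * exp (-(μ * y))) := fun y => by
    simp only [erlangPDF, Nat.add_sub_cancel, add_sub_cancel_right, rpow_natCast, neg_mul]
    ring
  rw [integral_congr_ae (ae_of_all _ h), integral_const_mul,
    integral_rpow_mul_exp_neg_mul_Ioi (by positivity) hμ, Gamma_nat_eq_factorial,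
    ← Nat.cast_add_one, rpow_natCast, one_div, inv_pow]
  field_simp

theorem integrableOn_erlangPDF_Ioi_zero (hρ : 0 < ρ) (hμ : 0 < μ) :
    IntegrableOn (erlangPDF ρ μ) (Ioi 0) :=
  Integrable.of_integral_ne_zero (by rw [integral_erlangPDF_Ioi_zero hρ hμ]; exact one_ne_zero)

theorem integral_erlangPDF_Ioi (hρ : 0 < ρ) (hμ : 0 < μ) {τ : ℝ} (hτ : 0 ≤ τ) :
    ∫ y in Ioi τ, erlangPDF ρ μ y = 1 - normIncGamma (μ * τ) ρ := by
  have hint := integrableOn_erlangPDF_Ioi_zero hρ hμ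
  rw [← integral_erlangPDF_Ioi_zero hρ hμ, ← intervalIntegral.integral_interval_add_Ioi hint
    (hint.mono_set (Ioi_subset_Ioi hτ)), intervalIntegral_erlangPDF hρ hμ.ne']
  ring

theorem exp_neg_mul_erlangPDF (ρ : ℕ) {μ s : ℝ} (hs : s + μ ≠ 0) (y : ℝ) :
    exp (-s * y) * erlangPDF ρ μ y = (μ / (s + μ)) ^ ρ * erlangPDF ρ (s + μ) y := by
  have hexp : exp (-s * y) * exp (-μ * y) = exp (-(s + μ) * y) := by
    rw [← exp_add]; ring_nf
  simp only [erlangPDF, div_pow, ← hexp]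
  field_simp

variable {θ τ : ℝ}

theorem integrableOn_exp_neg_max_mul_erlangPDF (hρ : 0 < ρ) (hθ : 0 ≤ θ) (hμ : 0 < μ)
    (hτ : 0 ≤ τ) : IntegrableOn (fun y => exp (-2 * θ * max τ y) * erlangPDF ρ μ y) (Ioi 0) := by
  refine (integrableOn_erlangPDF_Ioi_zero hρ hμ).bdd_mul (c := 1)
    (Continuous.aestronglyMeasurable (by fun_prop))
    (ae_of_all _ fun y => ?_)
  rw [norm_of_nonneg (exp_pos _).le, exp_le_one_iff]
  have : 0 ≤ max τ y := hτ.trans (le_max_left _ _)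
  nlinarith

theorem integral_exp_neg_max_mul_erlangPDF (hρ : 0 < ρ) (hθ : 0 ≤ θ) (hμ : 0 < μ)
    (hτ : 0 ≤ τ) :
    ∫ y in Ioi 0, exp (-2 * θ * max τ y) * erlangPDF ρ μ y
      = exp (-2 * θ * τ) * normIncGamma (μ * τ) ρ
        + (μ / (2 * θ + μ)) ^ ρ * (1 - normIncGamma ((2 * θ + μ) * τ) ρ) := by
  have hc : 0 < 2 * θ + μ := by positivity
  have hint := integrableOn_exp_neg_max_mul_erlangPDF hρ hθ hμ hτ
  have below : ∫ y in (0 : ℝ)..τ, exp (-2 * θ * max τ y) * erlangPDF ρ μ y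
      = ∫ y in (0 : ℝ)..τ, exp (-2 * θ * τ) * erlangPDF ρ μ y :=
    intervalIntegral.integral_congr fun y hy => by
      rw [uIcc_of_le hτ] at hy
      rw [max_eq_left hy.2]
  have above : EqOn (fun y => exp (-2 * θ * max τ y) * erlangPDF ρ μ y)
      (fun y => (μ / (2 * θ + μ)) ^ ρ * erlangPDF ρ (2 * θ + μ) y) (Ioi τ) := fun y hy => by
    dsimp only
    rw [max_eq_right (le_of_lt hy), ← exp_neg_mul_erlangPDF ρ hc.ne', neg_mul]
  rw [← intervalIntegral.integral_interval_add_Ioi hint (hint.mono_set (Ioi_subset_Ioi hτ)),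
    below, intervalIntegral.integral_const_mul, intervalIntegral_erlangPDF hρ hμ.ne',
    setIntegral_congr_fun measurableSet_Ioi above, integral_const_mul,
    integral_erlangPDF_Ioi hρ hc hτ]

end Erlang

theorem hasSum_choose_mul_erlangPDF {K : ℕ} (hK : 0 < K) (ε μ y : ℝ) :
    HasSum (fun n => ((n + K - 1).choose (K - 1) : ℝ) * ε ^ n * (1 - ε) ^ K
        * erlangPDF (n + K) μ y) (erlangPDF K ((1 - ε) * μ) y) := by
  obtain ⟨j, rfl⟩ : ∃ j, K = j + 1 := ⟨K - 1, by omega⟩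
  have hchoose : ∀ n, ((n + j).choose j : ℝ) = (n + j)! / (j ! * n !) := fun n => by
    rw [add_comm n j]; exact Nat.cast_add_choose ℝ
  set C := (1 - ε) ^ (j + 1) * μ ^ (j + 1) * y ^ j * exp (-μ * y) / (j ! : ℝ)
  have hexp := (NormedSpace.expSeries_div_hasSum_exp (ε * μ * y)).mul_left C
  rw [← exp_eq_exp_ℝ] at hexp
  have hval : erlangPDF (j + 1) ((1 - ε) * μ) y = C * exp (ε * μ * y) := by
    rw [erlangPDF, show -((1 - ε) * μ) * y = -μ * y + ε * μ * y by ring, exp_add]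
    simp only [C, Nat.add_sub_cancel, mul_pow]
    ring
  rw [hval]
  refine hexp.congr_fun fun n => ?_
  simp only [C, erlangPDF, hchoose, show n + (j + 1) - 1 = n + j by omega, Nat.add_sub_cancel]
  field_simp
  ring

/-- The function `F_k(τ)` of the paper (eq. (31)) equals `E[e^{-2θ max(τ, Ỹ)}]` where `Ỹ` has
the Gamma(K, (1-ε)μ) density (sum reindexed by `ρ = n + K`). -/
theorem F_eq_expected_exp_max (K : ℕ) (hK : 1 ≤ K) (ε θ μ τ : ℝ)
    (hε0 : 0 ≤ ε) (hε1 : ε < 1) (hθ : 0 < θ) (hμ : 0 < μ) (hτ : 0 ≤ τ) :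
    ∑' n : ℕ, (Nat.choose (n + K - 1) (K - 1) : ℝ) * ε ^ n * (1 - ε) ^ K *
        (Real.exp (-2 * θ * τ) * normIncGamma (μ * τ) (n + K)
          + (μ / (2 * θ + μ)) ^ (n + K) * (1 - normIncGamma ((2 * θ + μ) * τ) (n + K)))
      = ∫ y in Set.Ioi (0 : ℝ),
          Real.exp (-2 * θ * max τ y) *
            (((1 - ε) * μ) ^ K * y ^ (K - 1) * Real.exp (-(1 - ε) * μ * y)
              / (Nat.factorial (K - 1))) := by
  set w : ℕ → ℝ := fun n => (Nat.choose (n + K - 1) (K - 1) : ℝ) * ε ^ n * (1 - ε) ^ K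
  have hw : ∀ n, 0 ≤ w n := fun n => by have := sub_nonneg.2 hε1.le; positivity
  have hdensity : ∀ y, ((1 - ε) * μ) ^ K * y ^ (K - 1) * exp (-(1 - ε) * μ * y) / (K - 1)!
      = erlangPDF K ((1 - ε) * μ) y := fun y => by simp only [erlangPDF, neg_mul]
  simp_rw [hdensity]
  have hsum := hasSum_integral_of_nonneg_of_hasSum (ν := volume.restrict (Ioi 0))
    (F := fun n y => w n * (exp (-2 * θ * max τ y) * erlangPDF (n + K) μ y))
    (fun n => (Continuous.aestronglyMeasurable (by fun_prop)))
    (fun n => (ae_restrict_iff' measurableSet_Ioi).2 (ae_of_all _ fun y hy =>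
      mul_nonneg (hw n) (mul_nonneg (exp_pos _).le (erlangPDF_nonneg hμ.le (le_of_lt hy)))))
    (integrableOn_exp_neg_max_mul_erlangPDF hK hθ.le (mul_pos (sub_pos.2 hε1) hμ) hτ)
    (ae_of_all _ fun y => ((hasSum_choose_mul_erlangPDF hK ε μ y).mul_left
      (exp (-2 * θ * max τ y))).congr_fun fun n => by ring)
  rw [← hsum.tsum_eq]
  congr with n
  rw [integral_const_mul, integral_exp_neg_max_mul_erlangPDF (by omega) hθ.le hμ hτ]
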